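/- arXiv:2102.01474 — 4 statements merged into one kernel-verified Lean document; each statement's English description precedes it below -/
import Mathlib

section
/- Let Φ : ℂⁿ → ℝ be a strictly plurisubharmonic quadratic form and let u : ℂⁿ → ℂ be entire. Then: (i) u ∈ H^s_Φ(ℂⁿ) for every s ∈ ℝ if and only if for every N ∈ ℝ there exists C > 0 such that |u(z)| ≤ C ⟨z⟩^{N} e^{Φ(z)} for all z ∈ ℂⁿ; (ii) u ∈ H^s_Φ(ℂⁿ) for some s ∈ ℝ if and only if there exist N ∈ ℝ and C > 0 such that |u(z)| ≤ C ⟨z⟩^{N} e^{Φ(z)} for all z ∈ ℂⁿ. -/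
open Matrix MeasureTheory ENNReal

noncomputable section

/-- The squared Euclidean norm `|z|²` on `ℂⁿ`. -/
def eSq {n : ℕ} (z : Fin n → ℂ) : ℝ := ∑ i, Complex.normSq (z i)

/-- The Japanese bracket `⟨z⟩ = (1 + |z|²)^{1/2}`. -/
def jb {n : ℕ} (z : Fin n → ℂ) : ℝ := Real.sqrt (1 + eSq z)

/-- `Φ : ℂⁿ → ℝ` is a (real) quadratic form of the underlying real coordinates. -/
def IsRQuad {n : ℕ} (Φ : (Fin n → ℂ) → ℝ) : Prop :=
  ∃ B : (Fin n → ℂ) →ₗ[ℝ] (Fin n → ℂ) →ₗ[ℝ] ℝ, ∀ z, Φ z = B z z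

/-- `Φ : ℂⁿ → ℝ` is a strictly plurisubharmonic quadratic form.  For a quadratic form `Φ`,
the Levi form satisfies `(∂²_{z z̄}Φ) w ⋅ w̄ = (Φ(w) + Φ(i w))/2`, so positive definiteness of
the Levi matrix is equivalent to `Φ(w) + Φ(i·w) > 0` for all `w ≠ 0`. -/
def IsSPSH {n : ℕ} (Φ : (Fin n → ℂ) → ℝ) : Prop :=
  IsRQuad Φ ∧ ∀ z : Fin n → ℂ, z ≠ 0 → 0 < Φ z + Φ (Complex.I • z)

/-- The squared weighted norm `‖u‖_s² = ∫ |u(z)|² ⟨z⟩^{2s} e^{-2Φ(z)} L(dz)` (in `ℝ≥0∞`). -/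
def hnorm {n : ℕ} (Φ : (Fin n → ℂ) → ℝ) (s : ℝ) (u : (Fin n → ℂ) → ℂ) : ℝ≥0∞ :=
  ∫⁻ z : Fin n → ℂ, (‖u z‖₊ : ℝ≥0∞) ^ 2 * ENNReal.ofReal (jb z ^ (2 * s) * Real.exp (-2 * Φ z))

/-- A conic subset of `ℂⁿ`. -/
def IsConic {n : ℕ} (V : Set (Fin n → ℂ)) : Prop := ∀ z ∈ V, ∀ t : ℝ, 0 < t → t • z ∈ V

/-- The `1/2`-Gelfand–Shilov wavefront set of `u` relative to `Φ`: the complement in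
`ℂⁿ∖{0}` of the points having an open conic neighborhood in `ℂⁿ∖{0}` on which
`|u(z)| ≤ C e^{Φ(z) - c|z|²}`. -/
def wf {n : ℕ} (Φ : (Fin n → ℂ) → ℝ) (u : (Fin n → ℂ) → ℂ) : Set (Fin n → ℂ) :=
  {z₀ | z₀ ≠ 0 ∧ ¬ ∃ V : Set (Fin n → ℂ), IsOpen V ∧ IsConic V ∧ (0 : Fin n → ℂ) ∉ V ∧ z₀ ∈ V ∧
      ∃ C c : ℝ, 0 < C ∧ 0 < c ∧ ∀ z ∈ V, ‖u z‖ ≤ C * Real.exp (Φ z - c * eSq z)}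

/-- A holomorphic quadratic form on `ℂ^{2n} = ℂⁿ_z × ℂⁿ_θ`. -/
def IsCQuad2 {n : ℕ} (Ψ : (Fin n → ℂ) → (Fin n → ℂ) → ℂ) : Prop :=
  ∃ B : ((Fin n → ℂ) × (Fin n → ℂ)) →ₗ[ℂ] ((Fin n → ℂ) × (Fin n → ℂ)) →ₗ[ℂ] ℂ,
    ∀ z θ, Ψ z θ = B (z, θ) (z, θ)

/-- A real quadratic form on `ℂⁿ × ℂⁿ` viewed as a real vector space. -/
def IsRQuadPair {n : ℕ} (R : (Fin n → ℂ) → (Fin n → ℂ) → ℝ) : Prop :=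
  ∃ B : ((Fin n → ℂ) × (Fin n → ℂ)) →ₗ[ℝ] ((Fin n → ℂ) × (Fin n → ℂ)) →ₗ[ℝ] ℝ,
    ∀ z w, R z w = B (z, w) (z, w)

/-- The Bergman-form integral operator
`G u (z) = a ∫ e^{2Ψ(z, w̄)} u(w) e^{-2Φ(w)} L(dw)`. -/
def berg {n : ℕ} (a : ℂ) (Ψ : (Fin n → ℂ) → (Fin n → ℂ) → ℂ) (Φ : (Fin n → ℂ) → ℝ)
    (u : (Fin n → ℂ) → ℂ) (z : Fin n → ℂ) : ℂ :=
  a * ∫ w : Fin n → ℂ, Complex.exp (2 * Ψ z (star w)) * u w * (Real.exp (-2 * Φ w) : ℂ)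


/-!
A holomorphic function satisfies the sub-mean value inequality `π r² |f(a)| ≤ ∫_{D(a,r)} |f|` on
discs (integrate the mean value property over circles), hence on polydiscs by Fubini. Applied to
`u²` on the polydisc of radius `⟨a⟩⁻¹` about `a`, on which `⟨z⟩` is comparable to `⟨a⟩` and, `Φ`
being quadratic, `Φ` differs from `Φ(a)` by `O(1)`, it gives
`|u(a)|² ≲ ⟨a⟩^{2(n-s)} e^{2Φ(a)} ‖u‖²_s`: membership in `H^s_Φ` implies the bound with
`N = n - s`. Conversely, the bound with exponent `N` dominates the integrand of `‖u‖²_s` by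
`C² ⟨z⟩^{2(N+s)}`, which is integrable on `ℝ^{2n}` as soon as `N + s < -n`.
-/

open Metric Set Real

section SubMeanValue

variable {E : Type*} [NormedAddCommGroup E] [NormedSpace ℂ E] [CompleteSpace E]

theorem norm_le_circleAverage_norm {f : ℂ → E} (hf : Differentiable ℂ f) (c : ℂ) (R : ℝ) :
    ‖f c‖ ≤ circleAverage (fun z ↦ ‖f z‖) c R := by
  rw [← hf.diffContOnCl.circleAverage (R := R), circleAverage_def, circleAverage_def, norm_smul,
    smul_eq_mul, norm_inv, Real.norm_of_nonneg (by positivity)]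
  gcongr
  exact intervalIntegral.norm_integral_le_integral_norm (by positivity)

theorem ofReal_two_pi_mul_enorm_le_lintegral_circleMap {f : ℂ → E} (hf : Differentiable ℂ f)
    (c : ℂ) (R : ℝ) :
    ENNReal.ofReal (2 * π) * ‖f c‖ₑ ≤ ∫⁻ θ in Ioo (-π) π, ‖f (circleMap c R θ)‖ₑ := by
  have hcont : Continuous fun θ ↦ f (circleMap c R θ) :=
    hf.continuous.comp (continuous_circleMap c R)
  have havg : 2 * π * ‖f c‖ ≤ ∫ θ in Ioc (-π) π, ‖f (circleMap c R θ)‖ := by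
    have h := norm_le_circleAverage_norm hf c R
    simp_rw [circleAverage_eq_integral_add (-π), ← sub_eq_add_neg] at h
    rw [intervalIntegral.integral_comp_sub_right (fun θ ↦ ‖f (circleMap c R θ)‖), zero_sub,
      show 2 * π - π = π by ring, intervalIntegral.integral_of_le (by linarith [pi_pos]),
      smul_eq_mul] at h
    rwa [← le_inv_mul_iff₀ (by positivity)]
  rw [setLIntegral_congr Ioo_ae_eq_Ioc, ← ofReal_norm,
    ← ofReal_integral_norm_eq_lintegral_enorm
      (hcont.integrableOn_Icc.mono_set Ioc_subset_Icc_self),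
    ← ENNReal.ofReal_mul (by positivity)]
  exact ENNReal.ofReal_le_ofReal havg

theorem setLIntegral_closedBall_eq_lintegral_circleMap {g : ℂ → ℝ≥0∞} (hg : Measurable g)
    (c : ℂ) (r : ℝ) :
    ∫⁻ w in closedBall c r, g w =
      ∫⁻ ρ in Ioc 0 r, ∫⁻ θ in Ioo (-π) π, ENNReal.ofReal ρ * g (circleMap c ρ θ) := by
  set S : Set (ℝ × ℝ) := Ioc 0 r ×ˢ Ioo (-π) π
  have hS : S ⊆ polarCoord.target := prod_mono Ioc_subset_Ioi_self subset_rfl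
  have hpolar (p : ℝ × ℝ) : c + Complex.polarCoord.symm p = circleMap c p.1 p.2 := by
    simp only [Complex.polarCoord_symm_apply, circleMap, Complex.exp_mul_I, Complex.ofReal_cos,
      Complex.ofReal_sin]
  calc ∫⁻ w in closedBall c r, g w = ∫⁻ w, (closedBall c r).indicator g (c + w) := by
        rw [lintegral_add_left_eq_self, lintegral_indicator measurableSet_closedBall]
    _ = ∫⁻ p in polarCoord.target,
          ENNReal.ofReal p.1 * (closedBall c r).indicator g (circleMap c p.1 p.2) := by
        simp only [← Complex.lintegral_comp_polarCoord_symm, smul_eq_mul, hpolar]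
    _ = ∫⁻ p in S, ENNReal.ofReal p.1 * g (circleMap c p.1 p.2) := by
        rw [← inter_eq_left.mpr hS,
          ← setLIntegral_indicator (measurableSet_Ioc.prod measurableSet_Ioo)]
        refine setLIntegral_congr_fun Complex.polarCoord.open_target.measurableSet fun p hp ↦ ?_
        have hp1 : 0 < p.1 := hp.1
        by_cases hpr : p.1 ≤ r <;> simp [indicator, hp1, hpr, hp.2, Complex.dist_eq, abs_of_pos hp1]
    _ = _ := by
        rw [Measure.volume_eq_prod, ← Measure.prod_restrict, lintegral_prod]
        exact (ENNReal.measurable_ofReal.comp measurable_fst).mul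
          (hg.comp circleMap.continuous.measurable) |>.aemeasurable

theorem ofReal_mul_enorm_le_setLIntegral_closedBall {f : ℂ → E} (hf : Differentiable ℂ f)
    (c : ℂ) {r : ℝ} (hr : 0 ≤ r) :
    ENNReal.ofReal (π * r ^ 2) * ‖f c‖ₑ ≤ ∫⁻ w in closedBall c r, ‖f w‖ₑ := by
  have hradial : ∫⁻ ρ in Ioc 0 r, ENNReal.ofReal ρ = ENNReal.ofReal (r ^ 2 / 2) := by
    rw [← ofReal_integral_eq_lintegral_ofReal
        ((continuous_id'.integrableOn_Icc (a := (0 : ℝ)) (b := r)).mono_set Ioc_subset_Icc_self)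
        ((ae_restrict_iff' measurableSet_Ioc).mpr (ae_of_all _ fun ρ hρ ↦ hρ.1.le)),
      ← intervalIntegral.integral_of_le hr, integral_id]
    ring_nf
  rw [setLIntegral_closedBall_eq_lintegral_circleMap hf.continuous.enorm.measurable c r]
  calc ENNReal.ofReal (π * r ^ 2) * ‖f c‖ₑ
      = ∫⁻ ρ in Ioc 0 r, ENNReal.ofReal ρ * (ENNReal.ofReal (2 * π) * ‖f c‖ₑ) := by
        rw [lintegral_mul_const' _ _ (by finiteness), hradial, ← mul_assoc,
          ← ENNReal.ofReal_mul (by positivity)]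
        ring_nf
    _ ≤ _ := setLIntegral_mono' measurableSet_Ioc fun ρ _ ↦ by
        rw [lintegral_const_mul' _ _ ENNReal.ofReal_ne_top]
        gcongr
        exact ofReal_two_pi_mul_enorm_le_lintegral_circleMap hf c ρ

theorem setLIntegral_closedBall_eq_lintegral_cons {n : ℕ} {g : (Fin (n + 1) → ℂ) → ℝ≥0∞}
    (hg : Measurable g) (a : Fin (n + 1) → ℂ) {r : ℝ} (hr : 0 ≤ r) :
    ∫⁻ w in closedBall a r, g w =
      ∫⁻ x in closedBall (a 0) r, ∫⁻ y in closedBall (Fin.tail a) r, g (Fin.cons x y) := by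
  let e := MeasurableEquiv.piFinSuccAbove (fun _ : Fin (n + 1) ↦ ℂ) 0
  have he (p : ℂ × (Fin n → ℂ)) : e.symm p = Fin.cons p.1 p.2 := Fin.insertNth_zero' _ _
  have hpre : e.symm ⁻¹' closedBall a r = closedBall (a 0) r ×ˢ closedBall (Fin.tail a) r := by
    ext p
    simp only [mem_preimage, he, mem_prod, mem_closedBall, dist_pi_le_iff hr, Fin.forall_fin_succ,
      Fin.cons_zero, Fin.cons_succ, Fin.tail]
  have he_vol : MeasurePreserving e.symm (volume.prod volume) volume :=
    (volume_preserving_piFinSuccAbove (fun _ : Fin (n + 1) ↦ ℂ) 0).symm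
  rw [← he_vol.setLIntegral_comp_preimage_emb e.symm.measurableEmbedding, hpre,
    ← Measure.prod_restrict, lintegral_prod]
  · exact lintegral_congr fun x ↦ lintegral_congr fun y ↦ congrArg g (he (x, y))
  · exact (hg.comp e.symm.measurable).aemeasurable

/-- Closed balls of the sup norm on `Fin n → ℂ` are polydiscs, so the disc estimate applies one
coordinate at a time. -/
theorem ofReal_pow_mul_enorm_le_setLIntegral_closedBall {n : ℕ} {f : (Fin n → ℂ) → E}
    (hf : Differentiable ℂ f) (a : Fin n → ℂ) {r : ℝ} (hr : 0 ≤ r) :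
    ENNReal.ofReal (π * r ^ 2) ^ n * ‖f a‖ₑ ≤ ∫⁻ w in closedBall a r, ‖f w‖ₑ := by
  induction n with
  | zero =>
    have hball : closedBall a r = univ :=
      eq_univ_of_forall fun w ↦ by simp [Subsingleton.elim w a, hr]
    rw [hball, Measure.restrict_univ, volume_pi, Measure.pi_of_empty _ a, lintegral_dirac]
    simp
  | succ n ih =>
    have hcons : Differentiable ℂ fun p : ℂ × (Fin n → ℂ) ↦ f (Fin.cons p.1 p.2) :=
      hf.comp (Fin.consEquivL ℂ fun _ ↦ ℂ).differentiable
    rw [setLIntegral_closedBall_eq_lintegral_cons hf.continuous.enorm.measurable a hr]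
    calc ENNReal.ofReal (π * r ^ 2) ^ (n + 1) * ‖f a‖ₑ
        = ENNReal.ofReal (π * r ^ 2) ^ n *
            (ENNReal.ofReal (π * r ^ 2) * ‖f (Fin.cons (a 0) (Fin.tail a))‖ₑ) := by
          rw [Fin.cons_self_tail, pow_succ, mul_assoc]
      _ ≤ ENNReal.ofReal (π * r ^ 2) ^ n *
            ∫⁻ x in closedBall (a 0) r, ‖f (Fin.cons x (Fin.tail a))‖ₑ := by
          gcongr
          exact ofReal_mul_enorm_le_setLIntegral_closedBall
            (hcons.comp (differentiable_id.prodMk (differentiable_const _))) _ hr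
      _ = ∫⁻ x in closedBall (a 0) r,
            ENNReal.ofReal (π * r ^ 2) ^ n * ‖f (Fin.cons x (Fin.tail a))‖ₑ :=
          (lintegral_const_mul' _ _ (by finiteness)).symm
      _ ≤ _ := lintegral_mono fun x ↦
          ih (hcons.comp ((differentiable_const x).prodMk differentiable_id)) _

theorem ofReal_mul_sq_enorm_le_mul_lintegral {n : ℕ} {u : (Fin n → ℂ) → ℂ}
    (hu : Differentiable ℂ u) {ω : (Fin n → ℂ) → ℝ} {a : Fin n → ℂ} {r C : ℝ} (hr : 0 ≤ r)
    (hC : 0 ≤ C)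
    (hω : ∀ w ∈ closedBall a r, ω a ≤ C * ω w) :
    ENNReal.ofReal ((π * r ^ 2) ^ n * ω a) * ‖u a‖ₑ ^ 2 ≤
      ENNReal.ofReal C * ∫⁻ z, ‖u z‖ₑ ^ 2 * ENNReal.ofReal (ω z) := by
  have hsq (z : Fin n → ℂ) : ‖u z * u z‖ₑ = ‖u z‖ₑ ^ 2 := by rw [enorm_mul, sq]
  calc ENNReal.ofReal ((π * r ^ 2) ^ n * ω a) * ‖u a‖ₑ ^ 2
      = ENNReal.ofReal (ω a) * (ENNReal.ofReal (π * r ^ 2) ^ n * ‖u a * u a‖ₑ) := by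
        rw [ENNReal.ofReal_mul (by positivity), ENNReal.ofReal_pow (by positivity), hsq]; ring
    _ ≤ ENNReal.ofReal (ω a) * ∫⁻ w in closedBall a r, ‖u w * u w‖ₑ := by
        gcongr
        exact ofReal_pow_mul_enorm_le_setLIntegral_closedBall (hu.mul hu) a hr
    _ = ∫⁻ w in closedBall a r, ENNReal.ofReal (ω a) * ‖u w‖ₑ ^ 2 := by
        rw [← lintegral_const_mul' _ _ ENNReal.ofReal_ne_top]; simp only [hsq]
    _ ≤ ∫⁻ w in closedBall a r, ENNReal.ofReal C * (‖u w‖ₑ ^ 2 * ENNReal.ofReal (ω w)) :=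
        setLIntegral_mono' measurableSet_closedBall fun w hw ↦ by
          rw [mul_left_comm, ← ENNReal.ofReal_mul hC, mul_comm]
          gcongr
          exact hω w hw
    _ ≤ ∫⁻ w, ENNReal.ofReal C * (‖u w‖ₑ ^ 2 * ENNReal.ofReal (ω w)) :=
        setLIntegral_le_lintegral _ _
    _ = _ := lintegral_const_mul' _ _ ENNReal.ofReal_ne_top

end SubMeanValue

theorem eSq_nonneg {n : ℕ} (z : Fin n → ℂ) : 0 ≤ eSq z :=
  Finset.sum_nonneg fun _ _ ↦ Complex.normSq_nonneg _

theorem one_le_jb {n : ℕ} (z : Fin n → ℂ) : 1 ≤ jb z :=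
  Real.one_le_sqrt.mpr (le_add_of_nonneg_right (eSq_nonneg z))

theorem jb_pos {n : ℕ} (z : Fin n → ℂ) : 0 < jb z :=
  zero_lt_one.trans_le (one_le_jb z)

theorem norm_le_jb {n : ℕ} (z : Fin n → ℂ) : ‖z‖ ≤ jb z := by
  refine (pi_norm_le_iff_of_nonneg (jb_pos z).le).mpr fun i ↦ Real.le_sqrt_of_sq_le ?_
  calc ‖z i‖ ^ 2 = Complex.normSq (z i) := (Complex.normSq_eq_norm_sq _).symm
    _ ≤ eSq z := Finset.single_le_sum (fun j _ ↦ Complex.normSq_nonneg (z j)) (Finset.mem_univ i)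
    _ ≤ 1 + eSq z := le_add_of_nonneg_left zero_le_one

theorem eSq_le_of_norm_sub_le_one {n : ℕ} {z w : Fin n → ℂ} (h : ‖w - z‖ ≤ 1) :
    eSq w ≤ 2 * eSq z + 2 * n := by
  have hi (i : Fin n) : ‖w i‖ ^ 2 ≤ 2 * ‖z i‖ ^ 2 + 2 := by
    have h' : ‖w i - z i‖ ≤ 1 := (norm_le_pi_norm (w - z) i).trans h
    have hwi : ‖w i‖ ≤ ‖z i‖ + 1 := by linarith [norm_le_insert' (w i) (z i)]
    nlinarith [norm_nonneg (w i), sq_nonneg (‖z i‖ - 1)]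
  calc eSq w = ∑ i, ‖w i‖ ^ 2 := by simp only [eSq, Complex.normSq_eq_norm_sq]
    _ ≤ ∑ i, (2 * ‖z i‖ ^ 2 + 2) := Finset.sum_le_sum fun i _ ↦ hi i
    _ = 2 * eSq z + 2 * n := by
      simp [eSq, Complex.normSq_eq_norm_sq, Finset.sum_add_distrib, Finset.mul_sum, mul_comm]

theorem jb_le_of_norm_sub_le_one {n : ℕ} {z w : Fin n → ℂ} (h : ‖w - z‖ ≤ 1) :
    jb w ≤ √(2 * n + 2) * jb z := by
  rw [jb, jb, ← Real.sqrt_mul (by positivity)]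
  refine Real.sqrt_le_sqrt ?_
  nlinarith [eSq_le_of_norm_sub_le_one h, eSq_nonneg z, (Nat.cast_nonneg n : (0 : ℝ) ≤ n)]

theorem rpow_le_rpow_abs_mul_rpow {x y K : ℝ} (hx : 0 < x) (hy : 0 < y) (hxy : x ≤ K * y)
    (hyx : y ≤ K * x) (t : ℝ) : x ^ t ≤ K ^ |t| * y ^ t := by
  have hK : 0 < K := pos_of_mul_pos_left (hx.trans_le hxy) hy.le
  have hlog : |Real.log x - Real.log y| ≤ Real.log K := by
    rw [abs_sub_le_iff, sub_le_iff_le_add, sub_le_iff_le_add, ← Real.log_mul hK.ne' hy.ne',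
      ← Real.log_mul hK.ne' hx.ne']
    exact ⟨Real.log_le_log hx hxy, Real.log_le_log hy hyx⟩
  rw [Real.rpow_def_of_pos hx, Real.rpow_def_of_pos hy, Real.rpow_def_of_pos hK, ← Real.exp_add]
  gcongr
  have h : t * (Real.log x - Real.log y) ≤ |t| * Real.log K :=
    (le_abs_self _).trans ((abs_mul _ _).trans_le (mul_le_mul_of_nonneg_left hlog (abs_nonneg t)))
  linarith

theorem IsRQuad.exists_continuousLinearMap {n : ℕ} {Φ : (Fin n → ℂ) → ℝ} (hΦ : IsRQuad Φ) :
    ∃ B : (Fin n → ℂ) →L[ℝ] (Fin n → ℂ) →L[ℝ] ℝ, ∀ z, Φ z = B z z := by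
  obtain ⟨B, hB⟩ := hΦ
  exact ⟨LinearMap.toContinuousLinearMap (LinearMap.toContinuousLinearMap.toLinearMap ∘ₗ B), hB⟩

theorem ContinuousLinearMap.abs_apply_add_apply_add_sub_le {E : Type*} [SeminormedAddCommGroup E]
    [NormedSpace ℝ E] (B : E →L[ℝ] E →L[ℝ] ℝ) (a d : E) :
    |B (a + d) (a + d) - B a a| ≤ ‖B‖ * (2 * ‖a‖ * ‖d‖ + ‖d‖ ^ 2) := by
  have hexp : B (a + d) (a + d) - B a a = B a d + B d a + B d d := by
    simp only [map_add, _root_.add_apply]; ring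
  rw [hexp]
  calc |B a d + B d a + B d d| ≤ |B a d| + |B d a| + |B d d| := abs_add_three _ _ _
    _ ≤ ‖B‖ * ‖a‖ * ‖d‖ + ‖B‖ * ‖d‖ * ‖a‖ + ‖B‖ * ‖d‖ * ‖d‖ := by
      gcongr <;> exact B.le_opNorm₂ _ _
    _ = ‖B‖ * (2 * ‖a‖ * ‖d‖ + ‖d‖ ^ 2) := by ring

def hnormWeight {n : ℕ} (Φ : (Fin n → ℂ) → ℝ) (s : ℝ) (z : Fin n → ℂ) : ℝ :=
  jb z ^ (2 * s) * Real.exp (-2 * Φ z)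

theorem hnormWeight_pos {n : ℕ} (Φ : (Fin n → ℂ) → ℝ) (s : ℝ) (z : Fin n → ℂ) :
    0 < hnormWeight Φ s z :=
  mul_pos (Real.rpow_pos_of_pos (jb_pos z) _) (Real.exp_pos _)

theorem hnorm_eq_lintegral_hnormWeight {n : ℕ} (Φ : (Fin n → ℂ) → ℝ) (s : ℝ)
    (u : (Fin n → ℂ) → ℂ) :
    hnorm Φ s u = ∫⁻ z, ‖u z‖ₑ ^ 2 * ENNReal.ofReal (hnormWeight Φ s z) := rfl

/-- On the polydisc of radius `⟨a⟩⁻¹` the cross terms `B a (w - a)` of `Φ w - Φ a` stay bounded,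
because `‖a‖ ≤ ⟨a⟩`. -/
theorem hnormWeight_le_mul_hnormWeight {n : ℕ} {Φ : (Fin n → ℂ) → ℝ}
    {B : (Fin n → ℂ) →L[ℝ] (Fin n → ℂ) →L[ℝ] ℝ} (hB : ∀ z, Φ z = B z z) (s : ℝ)
    {a w : Fin n → ℂ} (hw : w ∈ closedBall a (jb a)⁻¹) :
    hnormWeight Φ s a ≤ √(2 * n + 2) ^ |2 * s| * Real.exp (6 * ‖B‖) * hnormWeight Φ s w := by
  have hd : ‖w - a‖ ≤ (jb a)⁻¹ := by rwa [mem_closedBall, dist_eq_norm] at hw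
  have hd1 : ‖w - a‖ ≤ 1 := hd.trans (inv_le_one_of_one_le₀ (one_le_jb a))
  have hjb : jb a ^ (2 * s) ≤ √(2 * n + 2) ^ |2 * s| * jb w ^ (2 * s) :=
    rpow_le_rpow_abs_mul_rpow (jb_pos a) (jb_pos w)
      (jb_le_of_norm_sub_le_one (by rwa [norm_sub_rev])) (jb_le_of_norm_sub_le_one hd1) _
  have had : ‖a‖ * ‖w - a‖ ≤ 1 :=
    calc ‖a‖ * ‖w - a‖ ≤ jb a * (jb a)⁻¹ :=
          mul_le_mul (norm_le_jb a) hd (norm_nonneg _) (jb_pos a).le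
      _ = 1 := mul_inv_cancel₀ (jb_pos a).ne'
  have hΦ : |Φ w - Φ a| ≤ 3 * ‖B‖ := by
    have h := B.abs_apply_add_apply_add_sub_le a (w - a)
    rw [add_sub_cancel, ← hB, ← hB, mul_assoc 2] at h
    refine h.trans ?_
    have hsq : ‖w - a‖ ^ 2 ≤ 1 := pow_le_one₀ (norm_nonneg _) hd1
    calc ‖B‖ * (2 * (‖a‖ * ‖w - a‖) + ‖w - a‖ ^ 2) ≤ ‖B‖ * (2 * 1 + 1) := by gcongr
      _ = 3 * ‖B‖ := by ring
  have hexp : Real.exp (-2 * Φ a) ≤ Real.exp (6 * ‖B‖) * Real.exp (-2 * Φ w) := by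
    rw [← Real.exp_add]
    gcongr
    linarith [(abs_le.mp hΦ).2]
  calc hnormWeight Φ s a
      ≤ (√(2 * n + 2) ^ |2 * s| * jb w ^ (2 * s)) * (Real.exp (6 * ‖B‖) * Real.exp (-2 * Φ w)) :=
        mul_le_mul hjb hexp (Real.exp_pos _).le
          (mul_nonneg (by positivity) (Real.rpow_nonneg (jb_pos w).le _))
    _ = _ := by rw [hnormWeight]; ring

theorem sq_mul_hnormWeight {n : ℕ} (Φ : (Fin n → ℂ) → ℝ) (s N : ℝ) (z : Fin n → ℂ) :
    (jb z ^ N * Real.exp (Φ z)) ^ 2 * hnormWeight Φ s z = jb z ^ (2 * (N + s)) := by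
  have ht := jb_pos z
  have hexp : Real.exp (Φ z) ^ 2 * Real.exp (-2 * Φ z) = 1 := by
    rw [← Real.exp_nat_mul, ← Real.exp_add]; norm_num
  calc _ = (jb z ^ N) ^ 2 * jb z ^ (2 * s) * (Real.exp (Φ z) ^ 2 * Real.exp (-2 * Φ z)) := by
        rw [hnormWeight]; ring
    _ = _ := by
        rw [hexp, mul_one, ← Real.rpow_natCast _ 2, ← Real.rpow_mul ht.le, ← Real.rpow_add ht]
        ring_nf

theorem norm_le_of_hnorm_lt_top {n : ℕ} {Φ : (Fin n → ℂ) → ℝ} (hΦ : IsRQuad Φ)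
    {u : (Fin n → ℂ) → ℂ} (hu : Differentiable ℂ u) {s : ℝ} (hs : hnorm Φ s u < ⊤) :
    ∃ C, 0 < C ∧ ∀ z, ‖u z‖ ≤ C * jb z ^ ((n : ℝ) - s) * Real.exp (Φ z) := by
  obtain ⟨B, hB⟩ := hΦ.exists_continuousLinearMap
  set K := √(2 * n + 2) ^ |2 * s| * Real.exp (6 * ‖B‖)
  set D := K * (hnorm Φ s u).toReal / π ^ n
  refine ⟨D + 1, by positivity, fun a ↦ ?_⟩
  set Y := jb a ^ ((n : ℝ) - s) * Real.exp (Φ a)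
  have hY : 0 < Y := mul_pos (Real.rpow_pos_of_pos (jb_pos a) _) (Real.exp_pos _)
  have hπ : (π * (jb a)⁻¹ ^ 2) ^ n * hnormWeight Φ s a * Y ^ 2 = π ^ n := by
    rw [mul_assoc, mul_comm (hnormWeight Φ s a), sq_mul_hnormWeight, sub_add_cancel,
      show 2 * (n : ℝ) = ((2 * n : ℕ) : ℝ) by push_cast; rfl, Real.rpow_natCast, mul_pow,
      ← pow_mul, inv_pow]
    field_simp [(jb_pos a).ne']
  have hmean := ofReal_mul_sq_enorm_le_mul_lintegral hu (inv_nonneg.mpr (jb_pos a).le)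
    (by positivity) fun w hw ↦ hnormWeight_le_mul_hnormWeight hB s hw
  rw [← hnorm_eq_lintegral_hnormWeight, ← ofReal_norm, ← ENNReal.ofReal_pow (norm_nonneg _),
    ← ENNReal.ofReal_mul (by have := hnormWeight_pos Φ s a; positivity),
    ENNReal.ofReal_le_iff_le_toReal (by finiteness),
    ENNReal.toReal_mul, ENNReal.toReal_ofReal (by positivity)] at hmean
  have hsq : ‖u a‖ ^ 2 ≤ D * Y ^ 2 := by
    rw [div_mul_eq_mul_div, le_div_iff₀ (by positivity), ← hπ]
    calc ‖u a‖ ^ 2 * ((π * (jb a)⁻¹ ^ 2) ^ n * hnormWeight Φ s a * Y ^ 2)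
        = (π * (jb a)⁻¹ ^ 2) ^ n * hnormWeight Φ s a * ‖u a‖ ^ 2 * Y ^ 2 := by ring
      _ ≤ K * (hnorm Φ s u).toReal * Y ^ 2 := by gcongr
  have hD : D ≤ (D + 1) ^ 2 := by nlinarith
  rw [mul_assoc, ← pow_le_pow_iff_left₀ (norm_nonneg _) (by positivity) two_ne_zero]
  calc ‖u a‖ ^ 2 ≤ D * Y ^ 2 := hsq
    _ ≤ (D + 1) ^ 2 * Y ^ 2 := by gcongr
    _ = ((D + 1) * Y) ^ 2 := by ring

theorem rpow_jb_le {n : ℕ} (z : Fin n → ℂ) {p : ℝ} (hp : p ≤ 0) :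
    jb z ^ p ≤ 2 ^ (-p) * (1 + ‖z‖) ^ p := by
  have h2 : 1 + ‖z‖ ≤ 2 * jb z := by linarith [one_le_jb z, norm_le_jb z]
  calc jb z ^ p = 2 ^ (-p) * (2 * jb z) ^ p := by
        rw [Real.mul_rpow zero_le_two (jb_pos z).le, ← mul_assoc,
          ← Real.rpow_add zero_lt_two, neg_add_cancel, Real.rpow_zero, one_mul]
    _ ≤ 2 ^ (-p) * (1 + ‖z‖) ^ p :=
        mul_le_mul_of_nonneg_left (Real.rpow_le_rpow_of_nonpos (by positivity) h2 hp)
          (by positivity)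

theorem lintegral_ofReal_rpow_jb_lt_top {n : ℕ} {p : ℝ} (hp : p < -(2 * n)) :
    ∫⁻ z : Fin n → ℂ, ENNReal.ofReal (jb z ^ p) < ⊤ := by
  have hfinrank : (Module.finrank ℝ (Fin n → ℂ) : ℝ) < -p := by
    rw [Module.finrank_pi_fintype, Complex.finrank_real_complex]
    simp only [Finset.sum_const, Finset.card_univ, Fintype.card_fin, smul_eq_mul]
    push_cast
    linarith
  calc ∫⁻ z : Fin n → ℂ, ENNReal.ofReal (jb z ^ p)
      ≤ ∫⁻ z : Fin n → ℂ, ENNReal.ofReal (2 ^ (-p)) * ENNReal.ofReal ((1 + ‖z‖) ^ (-(-p))) :=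
        lintegral_mono fun z ↦ by
          rw [neg_neg, ← ENNReal.ofReal_mul (by positivity)]
          exact ENNReal.ofReal_le_ofReal (rpow_jb_le z (by linarith [n.cast_nonneg (α := ℝ)]))
    _ = ENNReal.ofReal (2 ^ (-p)) * ∫⁻ z : Fin n → ℂ, ENNReal.ofReal ((1 + ‖z‖) ^ (-(-p))) :=
        lintegral_const_mul' _ _ ENNReal.ofReal_ne_top
    _ < ⊤ := ENNReal.mul_lt_top ENNReal.ofReal_lt_top (finite_integral_one_add_norm hfinrank)

theorem hnorm_lt_top_of_norm_le {n : ℕ} {Φ : (Fin n → ℂ) → ℝ} {u : (Fin n → ℂ) → ℂ}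
    {N C : ℝ} (hu : ∀ z, ‖u z‖ ≤ C * jb z ^ N * Real.exp (Φ z)) {s : ℝ} (hs : s + N < -n) :
    hnorm Φ s u < ⊤ := by
  have hpt (z : Fin n → ℂ) : ‖u z‖ₑ ^ 2 * ENNReal.ofReal (hnormWeight Φ s z) ≤
      ENNReal.ofReal (C ^ 2) * ENNReal.ofReal (jb z ^ (2 * (N + s))) := by
    have hw := hnormWeight_pos Φ s z
    rw [← ofReal_norm, ← ENNReal.ofReal_pow (norm_nonneg _), ← ENNReal.ofReal_mul (by positivity),
      ← ENNReal.ofReal_mul (sq_nonneg C), ← sq_mul_hnormWeight Φ s N z, ← mul_assoc, ← mul_pow,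
      ← mul_assoc]
    gcongr
    exact hu z
  rw [hnorm_eq_lintegral_hnormWeight]
  calc _ ≤ ∫⁻ z, ENNReal.ofReal (C ^ 2) * ENNReal.ofReal (jb z ^ (2 * (N + s))) :=
        lintegral_mono hpt
    _ = ENNReal.ofReal (C ^ 2) * ∫⁻ z, ENNReal.ofReal (jb z ^ (2 * (N + s))) :=
        lintegral_const_mul' _ _ ENNReal.ofReal_ne_top
    _ < ⊤ :=
        ENNReal.mul_lt_top ENNReal.ofReal_lt_top (lintegral_ofReal_rpow_jb_lt_top (by linarith))

theorem stmt_2_general (n : ℕ) (Φ : (Fin n → ℂ) → ℝ) (hΦ : IsSPSH Φ)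
    (u : (Fin n → ℂ) → ℂ) (hu : Differentiable ℂ u) :
    ((∀ s : ℝ, hnorm Φ s u < ⊤) ↔
        ∀ N : ℝ, ∃ C : ℝ, 0 < C ∧ ∀ z : Fin n → ℂ, ‖u z‖ ≤ C * jb z ^ N * Real.exp (Φ z)) ∧
    ((∃ s : ℝ, hnorm Φ s u < ⊤) ↔
        ∃ N C : ℝ, 0 < C ∧ ∀ z : Fin n → ℂ, ‖u z‖ ≤ C * jb z ^ N * Real.exp (Φ z)) := by
  have hbound {s : ℝ} (hs : hnorm Φ s u < ⊤) := norm_le_of_hnorm_lt_top hΦ.1 hu hs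
  refine ⟨⟨fun h N ↦ ?_, fun h s ↦ ?_⟩,
    ⟨fun ⟨s, hs⟩ ↦ ⟨n - s, hbound hs⟩, fun ⟨N, C, _, hC⟩ ↦ ?_⟩⟩
  · rw [← sub_sub_cancel (n : ℝ) N]
    exact hbound (h _)
  · obtain ⟨C, -, hC⟩ := h (-s - n - 1)
    exact hnorm_lt_top_of_norm_le hC (by linarith)
  · exact ⟨-N - n - 1, hnorm_lt_top_of_norm_le hC (by linarith)⟩

/-- For a strictly plurisubharmonic quadratic form `Φ` on `ℂⁿ` and an
entire function `u` on `ℂⁿ`: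
(i) `u ∈ H^s_Φ(ℂⁿ)` for every `s` iff for every `N` there is `C > 0` with
    `|u(z)| ≤ C ⟨z⟩^N e^{Φ(z)}` on `ℂⁿ`;
(ii) `u ∈ H^s_Φ(ℂⁿ)` for some `s` iff there are `N` and `C > 0` with
    `|u(z)| ≤ C ⟨z⟩^N e^{Φ(z)}` on `ℂⁿ`. -/
theorem stmt_2 (n : ℕ) (hn : 1 ≤ n) (Φ : (Fin n → ℂ) → ℝ) (hΦ : IsSPSH Φ)
    (u : (Fin n → ℂ) → ℂ) (hu : Differentiable ℂ u) :
    ((∀ s : ℝ, hnorm Φ s u < ⊤) ↔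
        ∀ N : ℝ, ∃ C : ℝ, 0 < C ∧ ∀ z : Fin n → ℂ, ‖u z‖ ≤ C * jb z ^ N * Real.exp (Φ z)) ∧
    ((∃ s : ℝ, hnorm Φ s u < ⊤) ↔
        ∃ N C : ℝ, 0 < C ∧ ∀ z : Fin n → ℂ, ‖u z‖ ≤ C * jb z ^ N * Real.exp (Φ z)) :=
  stmt_2_general n Φ hΦ u hu
end
end

section
/- Let Φ : ℂⁿ → ℝ be a strictly plurisubharmonic quadratic form and let u be an entire function on ℂⁿ satisfying |u(z)| ≤ C₀⟨z⟩^{N} e^{Φ(z)} on ℂⁿ for some C₀ > 0 and N ∈ ℝ. Then WF^{1/2}_Φ(u) = ∅ if and only if there exist C, c > 0 such that |u(z)| ≤ C e^{Φ(z) − c|z|²} for all z ∈ ℂⁿ. -/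
open Matrix MeasureTheory ENNReal

noncomputable section

/-- Let `Φ` be a strictly plurisubharmonic quadratic form on `ℂⁿ` and `u`
entire with `|u(z)| ≤ C₀ ⟨z⟩^N e^{Φ(z)}`.  Then `WF^{1/2}_Φ(u) = ∅` iff there are
`C, c > 0` with `|u(z)| ≤ C e^{Φ(z) − c|z|²}` on all of `ℂⁿ`. -/
theorem stmt_7 (n : ℕ) (hn : 1 ≤ n) (Φ : (Fin n → ℂ) → ℝ) (hΦ : IsSPSH Φ)
    (u : (Fin n → ℂ) → ℂ) (hu : Differentiable ℂ u)
    (C₀ N : ℝ) (hC₀ : 0 < C₀)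
    (hgrowth : ∀ z : Fin n → ℂ, ‖u z‖ ≤ C₀ * jb z ^ N * Real.exp (Φ z)) :
    wf Φ u = ∅ ↔
      ∃ C c : ℝ, 0 < C ∧ 0 < c ∧ ∀ z : Fin n → ℂ,
        ‖u z‖ ≤ C * Real.exp (Φ z - c * eSq z) := by
  have eSq_nonneg : ∀ z : Fin n → ℂ, 0 ≤ eSq z := fun z =>
    Finset.sum_nonneg fun i _ => Complex.normSq_nonneg _
  have hΦ0 : Φ 0 = 0 := by
    obtain ⟨B, hB⟩ := hΦ.1
    simp [hB]
  constructor
  · intro hwf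
    have H : ∀ z₀ : Fin n → ℂ, z₀ ≠ 0 → ∃ V : Set (Fin n → ℂ), IsOpen V ∧ IsConic V ∧
        (0 : Fin n → ℂ) ∉ V ∧ z₀ ∈ V ∧
        ∃ C c : ℝ, 0 < C ∧ 0 < c ∧ ∀ z ∈ V, ‖u z‖ ≤ C * Real.exp (Φ z - c * eSq z) := by
      intro z₀ hz₀
      by_contra h
      have : z₀ ∈ wf Φ u := ⟨hz₀, h⟩
      rw [hwf] at this
      exact this
    set S := Metric.sphere (0 : Fin n → ℂ) 1 with hSdef
    have hne : ∀ x : S, (x : Fin n → ℂ) ≠ 0 := by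
      intro x h
      have hx : (x : Fin n → ℂ) ∈ Metric.sphere (0 : Fin n → ℂ) 1 := x.2
      have hx' : ‖(x : Fin n → ℂ)‖ = 1 := mem_sphere_zero_iff_norm.mp hx
      rw [h] at hx'
      simp at hx'
    choose V hVopen hVconic hV0 hVmem Cf cf hCf hcf hbound using fun x : S => H x (hne x)
    have hS : IsCompact S := isCompact_sphere _ _
    have hcover : S ⊆ ⋃ x : S, V x := fun z hz => Set.mem_iUnion.2 ⟨⟨z, hz⟩, hVmem _⟩
    obtain ⟨t, ht⟩ := hS.elim_finite_subcover V hVopen hcover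
    haveI : Nontrivial (Fin n → ℂ) :=
      ⟨0, fun _ => 1, by
        intro h
        have := congrFun h ⟨0, hn⟩
        simp at this⟩
    have hSne : S.Nonempty := NormedSpace.sphere_nonempty.2 (by norm_num)
    obtain ⟨z₁, hz₁⟩ := hSne
    have hz₁' := ht hz₁
    simp only [Set.mem_iUnion] at hz₁'
    obtain ⟨x₁, hx₁t, _⟩ := hz₁'
    have htne : t.Nonempty := ⟨x₁, hx₁t⟩
    refine ⟨max C₀ (t.sup' htne Cf), t.inf' htne cf, lt_max_of_lt_left hC₀,
      (Finset.lt_inf'_iff htne).2 fun x _ => hcf x, ?_⟩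
    intro z
    by_cases hz : z = 0
    · subst hz
      have h1 : ‖u 0‖ ≤ C₀ := by
        have := hgrowth 0
        have hjb : jb (0 : Fin n → ℂ) = 1 := by
          simp [jb, eSq]
        simpa [hjb, hΦ0] using this
      have h2 : eSq (0 : Fin n → ℂ) = 0 := by simp [eSq]
      rw [h2, hΦ0]
      simp only [mul_zero, sub_zero, Real.exp_zero, mul_one]
      exact h1.trans (le_max_left _ _)
    · have hzn : (0 : ℝ) < ‖z‖ := norm_pos_iff.2 hz
      set w : Fin n → ℂ := ‖z‖⁻¹ • z with hw
      have hwS : w ∈ S := by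
        have : ‖w‖ = 1 := by
          rw [hw, norm_smul, norm_inv, norm_norm]
          field_simp
        simpa [hSdef] using this
      have hwt := ht hwS
      simp only [Set.mem_iUnion] at hwt
      obtain ⟨x, hxt, hxw⟩ := hwt
      have hzV : z ∈ V x := by
        have := hVconic x w hxw ‖z‖ hzn
        rwa [hw, smul_smul, mul_inv_cancel₀ (ne_of_gt hzn), one_smul] at this
      have hb := hbound x z hzV
      refine hb.trans ?_
      have hC : Cf x ≤ max C₀ (t.sup' htne Cf) :=
        le_trans (Finset.le_sup' Cf hxt) (le_max_right _ _)
      have hcle : t.inf' htne cf ≤ cf x := Finset.inf'_le cf hxt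
      have hexp : Real.exp (Φ z - cf x * eSq z) ≤
          Real.exp (Φ z - t.inf' htne cf * eSq z) := by
        apply Real.exp_le_exp.2
        have : t.inf' htne cf * eSq z ≤ cf x * eSq z :=
          mul_le_mul_of_nonneg_right hcle (eSq_nonneg z)
        linarith
      calc Cf x * Real.exp (Φ z - cf x * eSq z)
          ≤ Cf x * Real.exp (Φ z - t.inf' htne cf * eSq z) :=
            mul_le_mul_of_nonneg_left hexp (le_of_lt (hCf x))
        _ ≤ max C₀ (t.sup' htne Cf) * Real.exp (Φ z - t.inf' htne cf * eSq z) :=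
            mul_le_mul_of_nonneg_right hC (Real.exp_nonneg _)
  · rintro ⟨C, c, hC, hc, hbd⟩
    ext z₀
    simp only [Set.mem_empty_iff_false, iff_false]
    rintro ⟨hz₀, hno⟩
    apply hno
    refine ⟨{0}ᶜ, isOpen_compl_singleton, ?_, by simp, hz₀, C, c, hC, hc,
      fun z _ => hbd z⟩
    intro z hz t htpos
    simp only [Set.mem_compl_iff, Set.mem_singleton_iff] at hz ⊢
    exact smul_ne_zero (ne_of_gt htpos) hz
end
end

section
/- Let Q ∈ M_{2n×2n}(ℂ) be symmetric, let J = [[0, I],[−I, 0]] be the standard 2n×2n symplectic matrix, and let F = JQ with real and imaginary parts Re F = (F + F̄)/2 and Im F = (F − F̄)/(2i). Suppose X ∈ ℝ^{2n} satisfies (Re F)(Im F)^j X = 0 for all j = 0, 1, …, 2n−1. Then for every t ∈ ℝ, e^{−2itF} X = e^{2t·Im F} X = Σ_{k=0}^{∞} ((2t)^k / k!) (Im F)^k X; in particular e^{−2itF} X ∈ ℝ^{2n} for all t ∈ ℝ. -/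
/-!
By Cayley–Hamilton every power of `Im F` is a combination of its first `2n` powers, so
`(Re F)(Im F)^j X = 0` holds for every `j`. As `F = Re F + i Im F`, induction then gives
`F^k X = i^k (Im F)^k X`, hence `(-2itF)^k X = (2t Im F)^k X` for all `k`, and the two
exponential series agree on `X`.
-/

open Matrix

noncomputable section

open NormedSpace

namespace Matrix

variable {ι κ : Type*} [Fintype ι]

theorem mulVec_ofReal_of_re_mulVec_eq_zero (F : Matrix ι ι ℂ) {v : ι → ℝ}
    (h : F.map Complex.re *ᵥ v = 0) :
    F *ᵥ (fun i => (v i : ℂ)) = Complex.I • fun i => ((F.map Complex.im *ᵥ v) i : ℂ) := by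
  ext i
  have hi := congrFun h i
  simp only [mulVec, dotProduct, map_apply, Pi.zero_apply] at hi
  apply Complex.ext <;> simp [mulVec, dotProduct, Complex.re_sum, Complex.im_sum, hi]

theorem map_ofReal_mulVec (A : Matrix ι ι ℝ) (v : ι → ℝ) :
    A.map Complex.ofReal *ᵥ (fun i => (v i : ℂ)) = fun i => ((A *ᵥ v) i : ℂ) :=
  funext fun i => (RingHom.map_mulVec Complex.ofRealHom A v i).symm

variable [DecidableEq ι]

theorem map_ofReal_pow (A : Matrix ι ι ℝ) (k : ℕ) :
    A.map Complex.ofReal ^ k = (A ^ k).map Complex.ofReal :=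
  (A.map_pow Complex.ofRealHom k).symm

open Polynomial in
theorem mulVec_pow_mulVec_eq_zero_of_forall_lt_card {R : Type*} [CommRing R]
    [Nontrivial R] {A : Matrix ι ι R} {B : Matrix κ ι R} {v : ι → R}
    (h : ∀ j < Fintype.card ι, B *ᵥ (A ^ j *ᵥ v) = 0) (j : ℕ) :
    B *ᵥ (A ^ j *ᵥ v) = 0 := by
  rw [A.pow_eq_aeval_mod_charpoly]
  set p := X ^ j %ₘ A.charpoly
  have hp : p.degree < Fintype.card ι := by
    simpa [A.charpoly_degree_eq_dim] using degree_modByMonic_lt (X ^ j) A.charpoly_monic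
  rw [aeval_eq_sum_range, sum_mulVec, mulVec_sum]
  refine Finset.sum_eq_zero fun i _ => ?_
  by_cases hi : p.coeff i = 0
  · simp [hi]
  · rw [smul_mulVec, mulVec_smul, h i ?_, smul_zero]
    exact_mod_cast (le_degree_of_ne_zero hi).trans_lt hp

theorem pow_mulVec_ofReal_of_re_mulVec_eq_zero (F : Matrix ι ι ℂ) {v : ι → ℝ}
    (h : ∀ j : ℕ, F.map Complex.re *ᵥ (F.map Complex.im ^ j *ᵥ v) = 0) (k : ℕ) :
    F ^ k *ᵥ (fun i => (v i : ℂ)) =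
      Complex.I ^ k • fun i => ((F.map Complex.im ^ k *ᵥ v) i : ℂ) := by
  induction k with
  | zero => simp
  | succ k ih =>
    rw [pow_succ', ← mulVec_mulVec, ih, mulVec_smul, mulVec_ofReal_of_re_mulVec_eq_zero F (h k),
      smul_smul, ← pow_succ, mulVec_mulVec, ← pow_succ']

theorem exp_mulVec_eq_tsum {𝕂 : Type*} [RCLike 𝕂] (M : Matrix ι ι 𝕂) (v : ι → 𝕂) :
    exp M *ᵥ v = ∑' k : ℕ, (k.factorial⁻¹ : 𝕂) • (M ^ k *ᵥ v) := by
  have hM : HasSum (fun k : ℕ => (k.factorial⁻¹ : 𝕂) • M ^ k) (exp M) := by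
    open scoped Norms.Operator in exact exp_series_hasSum_exp' M
  let mulVecRight : Matrix ι ι 𝕂 →+ (ι → 𝕂) := AddMonoidHom.mk' (· *ᵥ v) (add_mulVec · · v)
  have := (hM.map mulVecRight (continuous_id.matrix_mulVec continuous_const)).tsum_eq
  simpa [mulVecRight, Function.comp_def, smul_mulVec] using this.symm

theorem exp_mulVec_congr {𝕂 : Type*} [RCLike 𝕂] {M N : Matrix ι ι 𝕂} {v w : ι → 𝕂}
    (h : ∀ k : ℕ, M ^ k *ᵥ v = N ^ k *ᵥ w) : exp M *ᵥ v = exp N *ᵥ w := by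
  simp only [exp_mulVec_eq_tsum, h]

theorem exp_map_ofReal (A : Matrix ι ι ℝ) :
    exp (A.map Complex.ofReal) = (exp A).map Complex.ofReal := by
  have hf : Continuous (Complex.ofRealHom.mapMatrix : Matrix ι ι ℝ →+* Matrix ι ι ℂ) :=
    continuous_id.matrix_map Complex.continuous_ofReal
  open scoped Norms.Operator in exact (map_exp _ hf A).symm

end Matrix

theorem stmt_15_general (n : ℕ)
    (F : Matrix (Fin n ⊕ Fin n) (Fin n ⊕ Fin n) ℂ)
    (ReF ImF : Matrix (Fin n ⊕ Fin n) (Fin n ⊕ Fin n) ℝ)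
    (hRe : ReF = F.map Complex.re) (hIm : ImF = F.map Complex.im)
    (X : Fin n ⊕ Fin n → ℝ)
    (hX : ∀ j : ℕ, j ≤ 2 * n - 1 → ReF.mulVec ((ImF ^ j).mulVec X) = 0)
    (t : ℝ) :
    ((NormedSpace.exp (((-2 : ℂ) * Complex.I * (t : ℂ)) • F)).mulVec (fun i => (X i : ℂ))
        = fun i => ((NormedSpace.exp ((2 * t) • ImF)).mulVec X i : ℂ)) ∧
    (NormedSpace.exp ((2 * t) • ImF)).mulVec X
        = ∑' k : ℕ, ((2 * t) ^ k / (Nat.factorial k : ℝ)) • (ImF ^ k).mulVec X := by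
  subst hRe hIm
  have hsingular : ∀ j, F.map Complex.re *ᵥ (F.map Complex.im ^ j *ᵥ X) = 0 :=
    mulVec_pow_mulVec_eq_zero_of_forall_lt_card fun j hj => hX j (by simp only [Fintype.card_sum, Fintype.card_fin] at hj; omega)
  have hpow (k : ℕ) : (((-2 : ℂ) * Complex.I * t) • F) ^ k *ᵥ (fun i => (X i : ℂ)) =
      (((2 * t) • F.map Complex.im).map Complex.ofReal) ^ k *ᵥ (fun i => (X i : ℂ)) := by
    have hcoef : (-2 : ℂ) * Complex.I * t * Complex.I = ((2 * t : ℝ) : ℂ) := by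
      push_cast
      linear_combination (-2 * (t : ℂ)) * Complex.I_sq
    rw [smul_pow, smul_mulVec, pow_mulVec_ofReal_of_re_mulVec_eq_zero F hsingular, smul_smul,
      ← mul_pow, hcoef, map_ofReal_pow, map_ofReal_mulVec, smul_pow, smul_mulVec]
    ext i
    simp
  constructor
  · rw [exp_mulVec_congr hpow, exp_map_ofReal, map_ofReal_mulVec]
  · rw [exp_mulVec_eq_tsum]
    refine tsum_congr fun k => ?_
    rw [smul_pow, smul_mulVec, smul_smul, inv_mul_eq_div]

/-- Let `Q` be a symmetric complex `2n×2n` matrix, `J` the standard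
symplectic matrix, `F = JQ`, with real and imaginary parts `Re F`, `Im F`.  If
`X ∈ ℝ^{2n}` satisfies `(Re F)(Im F)^j X = 0` for `j = 0, …, 2n−1`, then for every `t ∈ ℝ`,
`e^{−2itF} X = e^{2t·Im F} X = Σ_k ((2t)^k/k!) (Im F)^k X`; in particular
`e^{−2itF} X ∈ ℝ^{2n}`. -/
theorem stmt_15 (n : ℕ) (hn : 1 ≤ n)
    (Q : Matrix (Fin n ⊕ Fin n) (Fin n ⊕ Fin n) ℂ) (hQ : Qᵀ = Q)
    (J : Matrix (Fin n ⊕ Fin n) (Fin n ⊕ Fin n) ℂ)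
    (hJ : J = Matrix.fromBlocks 0 1 (-1) 0)
    (F : Matrix (Fin n ⊕ Fin n) (Fin n ⊕ Fin n) ℂ) (hF : F = J * Q)
    (ReF ImF : Matrix (Fin n ⊕ Fin n) (Fin n ⊕ Fin n) ℝ)
    (hRe : ReF = F.map Complex.re) (hIm : ImF = F.map Complex.im)
    (X : Fin n ⊕ Fin n → ℝ)
    (hX : ∀ j : ℕ, j ≤ 2 * n - 1 → ReF.mulVec ((ImF ^ j).mulVec X) = 0)
    (t : ℝ) :
    ((NormedSpace.exp (((-2 : ℂ) * Complex.I * (t : ℂ)) • F)).mulVec (fun i => (X i : ℂ))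
        = fun i => ((NormedSpace.exp ((2 * t) • ImF)).mulVec X i : ℂ)) ∧
    (NormedSpace.exp ((2 * t) • ImF)).mulVec X
        = ∑' k : ℕ, ((2 * t) ^ k / (Nat.factorial k : ℝ)) • (ImF ^ k).mulVec X :=
  stmt_15_general n F ReF ImF hRe hIm X hX t
end
end

section
/- Let Q ∈ M_{2n×2n}(ℂ) be symmetric, let J = [[0, I],[−I, 0]] be the standard 2n×2n symplectic matrix, let F = JQ, and let S = (⋂_{j=0}^{2n−1} ker[(Re F)(Im F)^j]) ∩ ℝ^{2n} be the singular space, where Re F = (F + F̄)/2 and Im F = (F − F̄)/(2i). Then for every t ∈ ℝ, e^{−2itF}(S) = S; equivalently, e^{2t·Im F}(S) = S for all t ∈ ℝ. -/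
/-!
Write `A = Re F` and `B = Im F`. By Cayley–Hamilton every power `B ^ j` is a combination of
`B ^ i` with `i < 2n`, so `S` is the set of real `X` with `A B ^ j X = 0` for *all* `j`. This set
is `B`-invariant, hence invariant under every `exp (s B)`, which is invertible with inverse
`exp (-s B)`. On `S` the real part of `F` acts as zero, so `F ^ k X = I ^ k B ^ k X`, and summing
the exponential series gives `exp (-2 I t F) X = exp (2 t B) X` for `X ∈ S`.
-/

open Matrix NormedSpace Complex

namespace Matrix

variable {m : Type*} [Fintype m]

def singularSpace {R : Type*} [CommRing R] [DecidableEq m] (A B : Matrix m m R) : Set (m → R) :=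
  {v | ∀ j : ℕ, A *ᵥ (B ^ j *ᵥ v) = 0}

section CommRing

variable {R : Type*} [CommRing R] [DecidableEq m] {A B : Matrix m m R} {v : m → R}

theorem mem_singularSpace_iff_lt_card [Nontrivial R] :
    v ∈ singularSpace A B ↔ ∀ j < Fintype.card m, A *ᵥ (B ^ j *ᵥ v) = 0 := by
  refine ⟨fun h j _ => h j, fun h k => ?_⟩
  set p := Polynomial.X ^ k %ₘ B.charpoly
  have hp : p.degree < Fintype.card m := by
    rw [← charpoly_degree_eq_dim B]
    exact Polynomial.degree_modByMonic_lt _ (charpoly_monic B)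
  rw [pow_eq_aeval_mod_charpoly, Polynomial.aeval_eq_sum_range, sum_mulVec, mulVec_sum]
  refine Finset.sum_eq_zero fun i _ => ?_
  rw [smul_mulVec, mulVec_smul]
  rcases lt_or_ge i (Fintype.card m) with hi | hi
  · rw [h i hi, smul_zero]
  · rw [Polynomial.coeff_eq_zero_of_degree_lt (hp.trans_le (by exact_mod_cast hi)), zero_smul]

theorem mulVec_mem_singularSpace (hv : v ∈ singularSpace A B) : B *ᵥ v ∈ singularSpace A B :=
  fun j => by simpa only [pow_succ, ← mulVec_mulVec] using hv (j + 1)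

end CommRing

section Exp

variable {𝕂 : Type*} [RCLike 𝕂] [DecidableEq m]

theorem mulVec_exp_mulVec_eq_tsum (N M : Matrix m m 𝕂) (v : m → 𝕂) :
    N *ᵥ (exp M *ᵥ v) = ∑' k : ℕ, (k.factorial⁻¹ : 𝕂) • N *ᵥ (M ^ k *ᵥ v) := by
  let _ : NormedRing (Matrix m m 𝕂) := Matrix.linftyOpNormedRing
  let _ : NormedAlgebra 𝕂 (Matrix m m 𝕂) := Matrix.linftyOpNormedAlgebra
  let L : Matrix m m 𝕂 →L[𝕂] (m → 𝕂) :=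
    LinearMap.toContinuousLinearMap
      (LinearMap.applyₗ v ∘ₗ toLin'.toLinearMap ∘ₗ LinearMap.mulLeft 𝕂 N)
  have hL : ∀ M, L M = N *ᵥ (M *ᵥ v) := fun M => by simp [L, mulVec_mulVec]
  -- instance search does not find completeness for this ad hoc norm over a general `RCLike` field
  rw [← hL, exp_eq_tsum 𝕂, L.map_tsum
    (@expSeries_summable' 𝕂 _ _ _ _ _ _ (FiniteDimensional.complete 𝕂 _) M)]
  simp only [hL, smul_mulVec, mulVec_smul]

theorem exp_smul_mulVec_mem_singularSpace {A B : Matrix m m 𝕂} {v : m → 𝕂}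
    (hv : v ∈ singularSpace A B) (s : 𝕂) : exp (s • B) *ᵥ v ∈ singularSpace A B := fun j => by
  rw [mulVec_mulVec, mulVec_exp_mulVec_eq_tsum]
  refine (tsum_congr fun k => ?_).trans tsum_zero
  rw [smul_pow, smul_mulVec, mulVec_smul, mulVec_mulVec, mul_assoc, ← pow_add, ← mulVec_mulVec,
    hv, smul_zero, smul_zero]

theorem image_exp_smul_mulVec_singularSpace (A B : Matrix m m 𝕂) (s : 𝕂) :
    (exp (s • B) *ᵥ ·) '' singularSpace A B = singularSpace A B := by
  refine (Set.MapsTo.image_subset fun v hv => exp_smul_mulVec_mem_singularSpace hv s).antisymm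
    fun v hv => ⟨exp ((-s) • B) *ᵥ v, exp_smul_mulVec_mem_singularSpace hv _, ?_⟩
  show exp (s • B) *ᵥ (exp ((-s) • B) *ᵥ v) = v
  rw [mulVec_mulVec, ← exp_add_of_commute _ _ ((Commute.refl B).smul_left _ |>.smul_right _),
    ← add_smul, add_neg_cancel, zero_smul, NormedSpace.exp_zero, one_mulVec]

end Exp

theorem map_ofReal_mulVec_s16 (M : Matrix m m ℝ) (v : m → ℝ) :
    M.map ofReal *ᵥ (ofReal ∘ v) = ofReal ∘ (M *ᵥ v) :=
  funext fun i => (RingHom.map_mulVec ofRealHom M v i).symm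

theorem mulVec_ofReal_of_map_re_mulVec_eq_zero {F : Matrix m m ℂ} {v : m → ℝ}
    (hv : F.map re *ᵥ v = 0) :
    F *ᵥ (ofReal ∘ v) = I • (ofReal ∘ (F.map im *ᵥ v)) := by
  have hF : F = (F.map re).map ofReal + I • (F.map im).map ofReal := by
    ext i j; simp [Complex.ext_iff]
  nth_rw 1 [hF]
  rw [add_mulVec, smul_mulVec, map_ofReal_mulVec_s16, map_ofReal_mulVec_s16, hv]
  simp

variable [DecidableEq m]

theorem exp_map_ofReal_s16 (M : Matrix m m ℝ) : exp (M.map ofReal) = (exp M).map ofReal := by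
  let _ : NormedRing (Matrix m m ℝ) := Matrix.linftyOpNormedRing
  let _ : NormedAlgebra ℝ (Matrix m m ℝ) := Matrix.linftyOpNormedAlgebra
  let _ : NormedRing (Matrix m m ℂ) := Matrix.linftyOpNormedRing
  let _ : NormedAlgebra ℂ (Matrix m m ℂ) := Matrix.linftyOpNormedAlgebra
  let _ : NormedAlgebra ℚ (Matrix m m ℝ) := NormedAlgebra.restrictScalars ℚ ℝ _
  have : CompleteSpace (Matrix m m ℝ) := FiniteDimensional.complete ℝ _
  exact (map_exp ofRealHom.mapMatrix (by exact continuous_id.matrix_map continuous_ofReal) M).symm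

section Complex

variable {F : Matrix m m ℂ} {v : m → ℝ}

theorem pow_mulVec_ofReal_of_mem_singularSpace (hv : v ∈ singularSpace (F.map re) (F.map im))
    (k : ℕ) : F ^ k *ᵥ (ofReal ∘ v) = I ^ k • (ofReal ∘ (F.map im ^ k *ᵥ v)) := by
  induction k generalizing v with
  | zero => simp
  | succ k ih =>
    have hv₀ : F.map re *ᵥ v = 0 := by simpa using hv 0
    rw [pow_succ, ← mulVec_mulVec, mulVec_ofReal_of_map_re_mulVec_eq_zero hv₀, mulVec_smul,
      ih (mulVec_mem_singularSpace hv), mulVec_mulVec, ← pow_succ, smul_smul, ← pow_succ']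

theorem exp_smul_mulVec_ofReal_of_mem_singularSpace
    (hv : v ∈ singularSpace (F.map re) (F.map im)) (s : ℝ) :
    exp ((-(s : ℂ) * I) • F) *ᵥ (ofReal ∘ v) = ofReal ∘ (exp (s • F.map im) *ᵥ v) := by
  have hseries : exp ((-(s : ℂ) * I) • F) *ᵥ (ofReal ∘ v)
      = exp ((s • F.map im).map ofReal) *ᵥ (ofReal ∘ v) := by
    rw [← one_mulVec (exp _ *ᵥ _), ← one_mulVec (exp ((s • F.map im).map ofReal) *ᵥ _),
      mulVec_exp_mulVec_eq_tsum, mulVec_exp_mulVec_eq_tsum]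
    refine tsum_congr fun k => ?_
    have hpow : (s • F.map im).map ofReal ^ k = ((s • F.map im) ^ k).map ofReal :=
      (Matrix.map_pow _ ofRealHom k).symm
    have hsI : -(s : ℂ) * I * I = s := by rw [mul_assoc, I_mul_I]; ring
    rw [one_mulVec, one_mulVec, smul_pow, smul_mulVec, pow_mulVec_ofReal_of_mem_singularSpace hv,
      hpow, map_ofReal_mulVec_s16, smul_pow, smul_mulVec, smul_smul ((-(s : ℂ) * I) ^ k), ← mul_pow,
      hsI]
    funext i
    simp
  rw [hseries, exp_map_ofReal_s16, map_ofReal_mulVec_s16]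

end Complex

end Matrix

theorem stmt_16_general (n : ℕ)
    (F : Matrix (Fin n ⊕ Fin n) (Fin n ⊕ Fin n) ℂ)
    (S : Set (Fin n ⊕ Fin n → ℝ))
    (hS : S = {X : Fin n ⊕ Fin n → ℝ | ∀ j : ℕ, j ≤ 2 * n - 1 →
        (F.map Complex.re).mulVec (((F.map Complex.im) ^ j).mulVec X) = 0})
    (t : ℝ) :
    ((fun X : Fin n ⊕ Fin n → ℂ =>
          (NormedSpace.exp (((-2 : ℂ) * Complex.I * (t : ℂ)) • F)).mulVec X) ''
        ((fun X : Fin n ⊕ Fin n → ℝ => fun i => (X i : ℂ)) '' S)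
      = (fun X : Fin n ⊕ Fin n → ℝ => fun i => (X i : ℂ)) '' S) ∧
    ((fun X : Fin n ⊕ Fin n → ℝ =>
          (NormedSpace.exp ((2 * t) • (F.map Complex.im))).mulVec X) '' S = S) := by
  have hS' : S = singularSpace (F.map re) (F.map im) := by
    ext X
    rw [hS, Set.mem_ofPred_eq]
    refine ⟨fun h => mem_singularSpace_iff_lt_card.2 fun j hj => h j ?_, fun h j _ => h j⟩
    rw [Fintype.card_sum, Fintype.card_fin] at hj
    omega
  subst hS'
  have hc : (-2 : ℂ) * I * t = -((2 * t : ℝ) : ℂ) * I := by push_cast; ring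
  refine ⟨?_, image_exp_smul_mulVec_singularSpace _ _ _⟩
  rw [Set.image_image, hc]
  change (fun X => exp ((-((2 * t : ℝ) : ℂ) * I) • F) *ᵥ (ofReal ∘ X)) '' _ = (ofReal ∘ ·) '' _
  rw [Set.image_congr fun X hX => exp_smul_mulVec_ofReal_of_mem_singularSpace hX (2 * t),
    ← Set.image_image (ofReal ∘ ·) (exp ((2 * t) • F.map im) *ᵥ ·),
    image_exp_smul_mulVec_singularSpace]

/-- Let `Q` be a symmetric complex `2n×2n` matrix, `J` the standard
symplectic matrix, `F = JQ`, and `S = (⋂_{j=0}^{2n−1} ker[(Re F)(Im F)^j]) ∩ ℝ^{2n}` the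
singular space.  Then for every `t ∈ ℝ`, `e^{−2itF}(S) = S` (as a subset of `ℂ^{2n}`);
equivalently `e^{2t·Im F}(S) = S`. -/
theorem stmt_16 (n : ℕ) (hn : 1 ≤ n)
    (Q : Matrix (Fin n ⊕ Fin n) (Fin n ⊕ Fin n) ℂ) (hQ : Qᵀ = Q)
    (J : Matrix (Fin n ⊕ Fin n) (Fin n ⊕ Fin n) ℂ)
    (hJ : J = Matrix.fromBlocks 0 1 (-1) 0)
    (F : Matrix (Fin n ⊕ Fin n) (Fin n ⊕ Fin n) ℂ) (hF : F = J * Q)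
    (S : Set (Fin n ⊕ Fin n → ℝ))
    (hS : S = {X : Fin n ⊕ Fin n → ℝ | ∀ j : ℕ, j ≤ 2 * n - 1 →
        (F.map Complex.re).mulVec (((F.map Complex.im) ^ j).mulVec X) = 0})
    (t : ℝ) :
    ((fun X : Fin n ⊕ Fin n → ℂ =>
          (NormedSpace.exp (((-2 : ℂ) * Complex.I * (t : ℂ)) • F)).mulVec X) ''
        ((fun X : Fin n ⊕ Fin n → ℝ => fun i => (X i : ℂ)) '' S)
      = (fun X : Fin n ⊕ Fin n → ℝ => fun i => (X i : ℂ)) '' S) ∧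
    ((fun X : Fin n ⊕ Fin n → ℝ =>
          (NormedSpace.exp ((2 * t) • (F.map Complex.im))).mulVec X) '' S = S) :=
  stmt_16_general n F S hS t
end
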